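/- arXiv:2012.01361 — 2 statements merged into one kernel-verified Lean document; each statement's English description precedes it below -/
import Mathlib

section
/- Let a₁,…,aₙ be nonnegative integers and let ℂˣ act on ℂⁿ by t • v = (t^{a₁}v₁,…,t^{aₙ}vₙ). Then for v ∈ ℂⁿ, the orbit ℂˣ • v is a closed subset of ℂⁿ if and only if v is a fixed point of the action, i.e., vᵢ = 0 for every i with aᵢ ≠ 0. -/
/-!
If `v` is fixed, its orbit is the single point `v`. Conversely, the orbit map `t ↦ (t ^ aᵢ vᵢ)ᵢ`
is polynomial, hence continuous on the whole field, and `0` is a limit of units; so the closure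
of the orbit contains the value at `t = 0`, the point `(0 ^ aᵢ vᵢ)ᵢ` that keeps the
weight-zero coordinates of `v` and kills the others. If the orbit is closed this point equals
`(t ^ aᵢ vᵢ)ᵢ` for some unit `t`, which forces `vᵢ = 0` whenever `aᵢ ≠ 0`.
-/

namespace WeightedAction

variable {𝕜 ι : Type*}

section Field

variable [Field 𝕜] (a : ι → ℕ) (v : ι → 𝕜)

def orbit : Set (ι → 𝕜) :=
  {w | ∃ t : 𝕜ˣ, w = fun i => (t : 𝕜) ^ a i * v i}

variable {a v}

theorem orbit_eq_singleton (hv : ∀ i, a i ≠ 0 → v i = 0) : orbit a v = {v} := by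
  have fixed (t : 𝕜) : (fun i => t ^ a i * v i) = v := by
    funext i
    by_cases hai : a i = 0
    · simp [hai]
    · simp [hv i hai]
  ext w
  constructor
  · rintro ⟨t, rfl⟩
    exact fixed t
  · rintro rfl
    exact ⟨1, (fixed 1).symm⟩

theorem image_compl_zero_subset_orbit :
    (fun t : 𝕜 => fun i => t ^ a i * v i) '' {0}ᶜ ⊆ orbit a v := by
  rintro _ ⟨t, ht, rfl⟩
  exact ⟨Units.mk0 t ht, rfl⟩

theorem eq_zero_of_zero_pow_mul_mem_orbit (h : (fun i => (0 : 𝕜) ^ a i * v i) ∈ orbit a v)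
    (i : ι) (hai : a i ≠ 0) : v i = 0 := by
  obtain ⟨t, ht⟩ := h
  have hi := congrFun ht i
  simp only [zero_pow hai, zero_mul] at hi
  exact (mul_eq_zero.mp hi.symm).resolve_left (pow_ne_zero _ t.ne_zero)

end Field

theorem zero_pow_mul_mem_closure_orbit [NontriviallyNormedField 𝕜] (a : ι → ℕ) (v : ι → 𝕜) :
    (fun i => (0 : 𝕜) ^ a i * v i) ∈ closure (orbit a v) := by
  have hcont : Continuous fun t : 𝕜 => fun i => t ^ a i * v i := by fun_prop
  have hzero : (0 : 𝕜) ∈ closure {0}ᶜ := by simp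
  exact closure_mono image_compl_zero_subset_orbit
    (hcont.continuousWithinAt.mem_closure_image hzero)

end WeightedAction

/-- Let `a₁,…,aₙ` be nonnegative integers and let `ℂˣ` act on `ℂⁿ` by
`t • v = (t^{a₁}v₁,…,t^{aₙ}vₙ)`.  The orbit of `v` is closed iff `v` is a fixed point,
i.e. `vᵢ = 0` for every `i` with `aᵢ ≠ 0`. -/
theorem stmt7 (n : ℕ) (a : Fin n → ℕ) (v : Fin n → ℂ) :
    IsClosed {w : Fin n → ℂ | ∃ t : ℂˣ, w = fun i => (t : ℂ) ^ (a i) * v i}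
      ↔ ∀ i, a i ≠ 0 → v i = 0 := by
  change IsClosed (WeightedAction.orbit a v) ↔ _
  constructor
  · intro hclosed
    exact WeightedAction.eq_zero_of_zero_pow_mul_mem_orbit
      (hclosed.closure_subset (WeightedAction.zero_pow_mul_mem_closure_orbit a v))
  · intro hv
    rw [WeightedAction.orbit_eq_singleton hv]
    exact isClosed_singleton
end

section
/- Let H be a finite group acting faithfully and ℂ-linearly on W = ℂⁿ, let p : W → W/H be the quotient map onto the orbit space with the quotient topology, and let U ⊆ W/H be such that Ω := p⁻¹(U) is open and connected in ℂⁿ. Let Θ : Ω → Ω be a bijection such that both Θ and Θ⁻¹ are holomorphic on Ω and such that Θ maps H-orbits to H-orbits, i.e., for w, w′ ∈ Ω, p(w) = p(w′) implies p(Θ(w)) = p(Θ(w′)), and likewise for Θ⁻¹. Then there exists a group automorphism σ of H such that Θ(h • w) = σ(h) • Θ(w) for all h ∈ H and all w ∈ Ω. -/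
/-!
For `h ∈ H` the map `Θ ∘ ρ h ∘ Θ⁻¹` preserves every orbit, so at each point of `Ω` it agrees
with some `ρ g`. As `H` is countable, Baire's theorem makes it agree with a single `ρ g` on an open
set, and the identity theorem (on complex lines) then on all of the connected set `Ω`. That `g` is
unique because `ρ` is faithful and linear maps agreeing on an open set are equal; uniqueness makes
`h ↦ g` an injective homomorphism, hence an automorphism of the finite group `H`.
-/

open Set Filter Topology

section IdentityTheorem

variable {E F : Type*} [NormedAddCommGroup E] [NormedSpace ℂ E] {U : Set E}

theorem Convex.lineMap_preimage (hU : Convex ℝ U) (c u : E) :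
    Convex ℝ (AffineMap.lineMap (k := ℂ) c u ⁻¹' U) := by
  intro t ht s hs a b ha hb hab
  rw [mem_preimage]
  convert hU ht hs ha hb hab using 1
  obtain rfl : b = 1 - a := by linarith
  simp only [AffineMap.lineMap_apply_module, ← Complex.coe_smul]
  push_cast
  module

variable [NormedAddCommGroup F] [NormedSpace ℂ F] [CompleteSpace F] {f g : E → F}

/-- Restricting to the complex line through `c` and `u` reduces this to one variable. -/
theorem DifferentiableOn.eqOn_of_convex_of_eventuallyEq (hf : DifferentiableOn ℂ f U)
    (hg : DifferentiableOn ℂ g U) (hU : IsOpen U) (hUc : Convex ℝ U) {c : E} (hc : c ∈ U)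
    (hfg : f =ᶠ[𝓝 c] g) : EqOn f g U := by
  intro u hu
  set γ := AffineMap.lineMap (k := ℂ) c u
  have hγU : MapsTo γ (γ ⁻¹' U) U := fun _ ht => ht
  have hopen : IsOpen (γ ⁻¹' U) := hU.preimage AffineMap.lineMap_continuous
  have hγ0 : γ 0 = c := AffineMap.lineMap_apply_zero c u
  have hline : EqOn (f ∘ γ) (g ∘ γ) (γ ⁻¹' U) := by
    refine AnalyticOnNhd.eqOn_of_preconnected_of_eventuallyEq
      ((hf.comp γ.differentiableOn hγU).analyticOnNhd hopen)
      ((hg.comp γ.differentiableOn hγU).analyticOnNhd hopen)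
      (hUc.lineMap_preimage c u).isPreconnected (show γ 0 ∈ U by rwa [hγ0]) ?_
    exact hfg.comp_tendsto (hγ0 ▸ AffineMap.lineMap_continuous.tendsto 0)
  simpa [γ] using hline (show γ 1 ∈ U by simpa [γ] using hu)

theorem DifferentiableOn.eqOn_of_preconnected_of_eventuallyEq (hf : DifferentiableOn ℂ f U)
    (hg : DifferentiableOn ℂ g U) (hU : IsOpen U) (hUc : IsPreconnected U) {c : E} (hc : c ∈ U)
    (hfg : f =ᶠ[𝓝 c] g) : EqOn f g U := by
  set A := {x | f =ᶠ[𝓝 x] g}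
  have hAU : U ⊆ A := by
    refine hUc.subset_of_closure_inter_subset isOpen_setOfPred_eventually_nhds ⟨c, hc, hfg⟩ ?_
    rintro x ⟨hxA, hxU⟩
    obtain ⟨ε, hε, hball⟩ := Metric.isOpen_iff.mp hU x hxU
    obtain ⟨y, hy, hyA⟩ := mem_closure_iff.mp hxA _ Metric.isOpen_ball (Metric.mem_ball_self hε)
    exact eventuallyEq_of_mem (Metric.ball_mem_nhds x hε) <|
      (hf.mono hball).eqOn_of_convex_of_eventuallyEq (hg.mono hball) Metric.isOpen_ball
        (convex_ball x ε) hy hyA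
  exact fun x hx => (hAU hx).eq_of_nhds

end IdentityTheorem

theorem IsOpen.exists_eventuallyEq_of_forall_exists_eq {X Y ι : Type*} [TopologicalSpace X]
    [LocallyCompactSpace X] [T2Space X] [TopologicalSpace Y] [T2Space Y] [Countable ι]
    {U : Set X} (hU : IsOpen U) (hne : U.Nonempty) {f : X → Y} {g : ι → X → Y}
    (hf : ContinuousOn f U) (hg : ∀ i, ContinuousOn (g i) U) (h : ∀ x ∈ U, ∃ i, f x = g i x) :
    ∃ i, ∃ x ∈ U, f =ᶠ[𝓝 x] g i := by
  have := hU.locallyCompactSpace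
  have := hne.to_subtype
  obtain ⟨i, x, hx⟩ := nonempty_interior_of_iUnion_of_closed
    (f := fun i => {x : U | f x = g i x})
    (fun i => isClosed_eq hf.domRestrict (hg i).domRestrict)
    (iUnion_eq_univ_iff.mpr fun x => h x x.2)
  refine ⟨i, x, x.2, eventuallyEq_of_mem ((hU.isOpenMap_subtype_val _ isOpen_interior).mem_nhds
    (mem_image_of_mem _ hx)) ?_⟩
  rintro _ ⟨y, hy, rfl⟩
  exact interior_subset (s := {x : U | f x = g i x}) hy

theorem LinearMap.differentiable_of_finiteDimensional {𝕜 E F : Type*} [NontriviallyNormedField 𝕜]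
    [CompleteSpace 𝕜] [NormedAddCommGroup E] [NormedSpace 𝕜 E] [FiniteDimensional 𝕜 E]
    [NormedAddCommGroup F] [NormedSpace 𝕜 F] (f : E →ₗ[𝕜] F) : Differentiable 𝕜 f :=
  (LinearMap.toContinuousLinearMap f).differentiable

section LinearAction

variable {E : Type*} [NormedAddCommGroup E] [NormedSpace ℂ E] [FiniteDimensional ℂ E]
  {H : Type*} [Group H] (ρ : H →* (E ≃ₗ[ℂ] E)) {Ω : Set E}

theorem eq_of_eqOn_of_isOpen (hρ : Function.Injective ρ) (hΩ : IsOpen Ω) (hne : Ω.Nonempty)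
    {g g' : H} (h : EqOn (ρ g) (ρ g') Ω) : g = g' := by
  obtain ⟨w, hw⟩ := hne
  have hρg := (ρ g : E →ₗ[ℂ] E).differentiable_of_finiteDimensional
  have hρg' := (ρ g' : E →ₗ[ℂ] E).differentiable_of_finiteDimensional
  refine hρ (DFunLike.coe_injective (funext fun x => ?_))
  exact hρg.differentiableOn.eqOn_of_preconnected_of_eventuallyEq hρg'.differentiableOn
    isOpen_univ isPreconnected_univ (mem_univ w) (eventuallyEq_of_mem (hΩ.mem_nhds hw) h)
    (mem_univ x)

theorem exists_semiconj_of_mapsOrbits [Countable H] (hΩ : IsOpen Ω) (hΩc : IsConnected Ω)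
    (hsat : ∀ h : H, ∀ w ∈ Ω, ρ h w ∈ Ω) {Θ Θ' : E → E} (hmaps : MapsTo Θ Ω Ω)
    (hmaps' : MapsTo Θ' Ω Ω) (hinv : InvOn Θ' Θ Ω Ω) (hhol : DifferentiableOn ℂ Θ Ω)
    (hhol' : DifferentiableOn ℂ Θ' Ω)
    (horb : ∀ w ∈ Ω, ∀ w' ∈ Ω, (∃ h : H, ρ h w = w') → ∃ h : H, ρ h (Θ w) = Θ w') (h : H) :
    ∃ g : H, ∀ w ∈ Ω, Θ (ρ h w) = ρ g (Θ w) := by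
  have hρ (g : H) := (ρ g : E →ₗ[ℂ] E).differentiable_of_finiteDimensional
  set Φ := fun w => Θ (ρ h (Θ' w))
  have hΦ : DifferentiableOn ℂ Φ Ω :=
    hhol.comp ((hρ h).comp_differentiableOn hhol') fun w hw => hsat h _ (hmaps' hw)
  have hcover : ∀ w ∈ Ω, ∃ g : H, Φ w = ρ g w := by
    intro w hw
    obtain ⟨g, hg⟩ := horb _ (hmaps' hw) _ (hsat h _ (hmaps' hw)) ⟨h, rfl⟩
    exact ⟨g, hg.symm.trans (congrArg (ρ g) (hinv.2 hw))⟩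
  obtain ⟨g, x, hx, hΦg⟩ := hΩ.exists_eventuallyEq_of_forall_exists_eq hΩc.nonempty
    hΦ.continuousOn (fun g => (hρ g).continuous.continuousOn) hcover
  have hΦg_on : EqOn Φ (ρ g) Ω := hΦ.eqOn_of_preconnected_of_eventuallyEq
    (hρ g).differentiableOn hΩ hΩc.isPreconnected hx hΦg
  refine ⟨g, fun w hw => ?_⟩
  simpa only [Φ, hinv.1 hw] using hΦg_on (hmaps hw)

end LinearAction

theorem stmt9_general (n : ℕ) (H : Type*) [Group H] [Finite H]
    (ρ : H →* ((Fin n → ℂ) ≃ₗ[ℂ] (Fin n → ℂ)))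
    (hfaithful : Function.Injective ρ)
    (Ω : Set (Fin n → ℂ)) (hΩopen : IsOpen Ω) (hΩconn : IsConnected Ω)
    (hΩsat : ∀ (h : H), ∀ w ∈ Ω, ρ h w ∈ Ω)
    (Θ Θ' : (Fin n → ℂ) → (Fin n → ℂ))
    (hmaps : Set.MapsTo Θ Ω Ω) (hmaps' : Set.MapsTo Θ' Ω Ω)
    (hinv : Set.InvOn Θ' Θ Ω Ω)
    (hhol : DifferentiableOn ℂ Θ Ω) (hhol' : DifferentiableOn ℂ Θ' Ω)
    (horb : ∀ w ∈ Ω, ∀ w' ∈ Ω, (∃ h : H, ρ h w = w') → ∃ h : H, ρ h (Θ w) = Θ w') :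
    ∃ σ : H ≃* H, ∀ (h : H), ∀ w ∈ Ω, Θ (ρ h w) = ρ (σ h) (Θ w) := by
  choose σ hσ using exists_semiconj_of_mapsOrbits ρ hΩopen hΩconn hΩsat hmaps hmaps' hinv hhol
    hhol' horb
  have hσ_unique : ∀ h g, (∀ w ∈ Ω, Θ (ρ h w) = ρ g (Θ w)) → σ h = g := by
    intro h g hg
    refine eq_of_eqOn_of_isOpen ρ hfaithful hΩopen hΩconn.nonempty fun u hu => ?_
    obtain ⟨w, hw, rfl⟩ := hinv.2.surjOn hmaps' hu
    rw [← hσ h w hw, hg w hw]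
  have hσ_mul : ∀ h₁ h₂, σ (h₁ * h₂) = σ h₁ * σ h₂ := fun h₁ h₂ =>
    hσ_unique _ _ fun w hw => by
      simp only [map_mul, LinearEquiv.mul_apply, hσ _ _ (hΩsat _ _ hw), hσ _ _ hw]
  have hσ_inj : Function.Injective σ := fun h h' hhh' =>
    eq_of_eqOn_of_isOpen ρ hfaithful hΩopen hΩconn.nonempty fun w hw =>
      hinv.1.injOn (hΩsat h w hw) (hΩsat h' w hw) (by rw [hσ h w hw, hσ h' w hw, hhh'])
  exact ⟨MulEquiv.ofBijective (MonoidHom.mk' σ hσ_mul) (Finite.injective_iff_bijective.mp hσ_inj),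
    hσ⟩

/-- Let a finite group `H` act faithfully and `ℂ`-linearly on
`W = ℂⁿ` via `ρ`, and let `Ω = p⁻¹(U)` be an open connected `H`-saturated subset of
`W` (the preimage of a subset `U` of the orbit space).  Let `Θ : Ω → Ω` be a bijection
(with inverse `Θ'`), biholomorphic on `Ω`, mapping `H`-orbits to `H`-orbits (and
likewise for `Θ'`).  Then there is a group automorphism `σ` of `H` such that
`Θ(h • w) = σ(h) • Θ(w)` for all `h ∈ H` and `w ∈ Ω`. -/
theorem stmt9 (n : ℕ) (H : Type*) [Group H] [Finite H]
    (ρ : H →* ((Fin n → ℂ) ≃ₗ[ℂ] (Fin n → ℂ)))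
    (hfaithful : Function.Injective ρ)
    (Ω : Set (Fin n → ℂ)) (hΩopen : IsOpen Ω) (hΩconn : IsConnected Ω)
    (hΩsat : ∀ (h : H), ∀ w ∈ Ω, ρ h w ∈ Ω)
    (Θ Θ' : (Fin n → ℂ) → (Fin n → ℂ))
    (hmaps : Set.MapsTo Θ Ω Ω) (hmaps' : Set.MapsTo Θ' Ω Ω)
    (hinv : Set.InvOn Θ' Θ Ω Ω)
    (hhol : DifferentiableOn ℂ Θ Ω) (hhol' : DifferentiableOn ℂ Θ' Ω)
    (horb : ∀ w ∈ Ω, ∀ w' ∈ Ω, (∃ h : H, ρ h w = w') → ∃ h : H, ρ h (Θ w) = Θ w')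
    (horb' : ∀ w ∈ Ω, ∀ w' ∈ Ω, (∃ h : H, ρ h w = w') → ∃ h : H, ρ h (Θ' w) = Θ' w') :
    ∃ σ : H ≃* H, ∀ (h : H), ∀ w ∈ Ω, Θ (ρ h w) = ρ (σ h) (Θ w) :=
  stmt9_general n H ρ hfaithful Ω hΩopen hΩconn hΩsat Θ Θ' hmaps hmaps' hinv hhol hhol' horb
end
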